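/- arXiv:1102.2689 — 2 statements merged into one kernel-verified Lean document; each statement's English description precedes it below -/
import Mathlib

section
/- Let w ∈ S_n and let u_1, u_2 ∈ S_n with u_1 ≤_L w and u_2 ≤_L w. Then there exists v ∈ S_n with v ≤_L w whose Lehmer code is the coordinatewise minimum: c(v) = c(u_1) ∧ c(u_2). That is, the set c(Λ_w) ⊆ ℕ^n is closed under the coordinatewise meet of ℕ^n. -/
/-- The inversion set of `w`: pairs of positions `(i,j)` with `i < j` and `w i > w j`. -/
def Invs {n : ℕ} (w : Equiv.Perm (Fin n)) : Finset (Fin n × Fin n) :=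
  Finset.univ.filter (fun p => p.1 < p.2 ∧ w p.2 < w p.1)

/-- The length (number of inversions) of `w`. -/
def len {n : ℕ} (w : Equiv.Perm (Fin n)) : ℕ := (Invs w).card

/-- The `i`-th entry of the Lehmer code of `w`. -/
def lehmer {n : ℕ} (w : Equiv.Perm (Fin n)) (i : Fin n) : ℕ :=
  ((Invs w).filter (fun p => p.1 = i)).card

/-- The extended Lehmer code `m_{i,j}(w)`: the number of inversions `(i,k)` with `k < j`. -/
def mext {n : ℕ} (w : Equiv.Perm (Fin n)) (i : Fin n) (j : Fin (n + 1)) : ℕ :=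
  ((Invs w).filter (fun p => p.1 = i ∧ (p.2 : ℕ) < (j : ℕ))).card

/-- The left weak order: `v ≤_L w` iff `inv(v) ⊆ inv(w)`. -/
def leftWeak {n : ℕ} (v w : Equiv.Perm (Fin n)) : Prop := Invs v ⊆ Invs w

/-- The value of `w` extended to `Fin (n+1)` by fixing the last point
(the `1`-indexed convention `w(n+1) = n+1` becomes `wval w n = n` here). -/
def wval {n : ℕ} (w : Equiv.Perm (Fin n)) (j : Fin (n + 1)) : ℕ :=
  if h : (j : ℕ) < n then (w ⟨j, h⟩ : ℕ) else n

/-- The set of non-inversions of `w`: pairs `(i,j)` with `i ≤ j ≤ n+1` and `w i ≤ w j`,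
where `w` is extended by fixing the last point. -/
def Ninvs {n : ℕ} (w : Equiv.Perm (Fin n)) : Finset (Fin n × Fin (n + 1)) :=
  Finset.univ.filter (fun p => (p.1 : ℕ) ≤ (p.2 : ℕ) ∧ (w p.1 : ℕ) ≤ wval w p.2)

/-- The set of Lehmer codes of elements of the weak order interval `Λ_w = [id, w]`. -/
def codeSet {n : ℕ} (w : Equiv.Perm (Fin n)) : Set (Fin n → ℕ) :=
  {x | ∃ v : Equiv.Perm (Fin n), leftWeak v w ∧ lehmer v = x}

/-- The tuple `b_{i,x}(w)`: the `j`-th coordinate is `0` if `j < i` or `(i,j) ∈ inv(w)`,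
and is `max {0, x - m_{i,j}(w)}` (truncated subtraction) if `j ≥ i` and `(i,j) ∈ ninv(w)`. -/
def bmin {n : ℕ} (w : Equiv.Perm (Fin n)) (i : Fin n) (x : ℕ) : Fin n → ℕ :=
  fun j => if (i : ℕ) ≤ (j : ℕ) ∧ (w i : ℕ) ≤ (w j : ℕ) then x - mext w i j.castSucc else 0

/-- The set `M_w` of all `b_{i,x}(w)` for `1 ≤ x ≤ c_i(w)`. -/
def Mset {n : ℕ} (w : Equiv.Perm (Fin n)) : Set (Fin n → ℕ) :=
  {z | ∃ (i : Fin n) (x : ℕ), 1 ≤ x ∧ x ≤ lehmer w i ∧ z = bmin w i x}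

/-- The direct sum `v × w ∈ S_{m+n}` of permutations. -/
def dsum {m n : ℕ} (v : Equiv.Perm (Fin m)) (w : Equiv.Perm (Fin n)) :
    Equiv.Perm (Fin (m + n)) :=
  finSumFinEquiv.permCongr (Equiv.sumCongr v w)

/-!
Induct on `n`. A permutation of `Fin (n + 1)` is its value `p` at `0` followed by a permutation
`e` of `Fin n` recording the relative order of the remaining values, and its Lehmer code is `p`
followed by the code of `e`. So for `u₁ = (p₁, e₁)` and `u₂ = (p₂, e₂)` take `v = (p₁ ⊓ p₂, v')`
with `v'` obtained for `e₁, e₂`. Carrying along `u₁ j ⊓ u₂ j ≤ v j` for all `j` makes every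
inversion of `v` an inversion of `u₁` or of `u₂`, hence of `w`.
-/

open Equiv Finset

variable {n : ℕ}

lemma mem_Invs {w : Perm (Fin n)} {p : Fin n × Fin n} :
    p ∈ Invs w ↔ p.1 < p.2 ∧ w p.2 < w p.1 := by
  simp [Invs]

lemma lehmer_eq_card (w : Perm (Fin n)) (i : Fin n) :
    lehmer w i = #{j | i < j ∧ w j < w i} := by
  refine card_nbij' Prod.snd (fun j => (i, j)) ?_ ?_ ?_ ?_ <;>
    intro x <;> aesop (add simp [Invs])

/-- `e` with the value `p` prepended and the other values shifted around it. -/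
def consPerm (p : Fin (n + 1)) (e : Perm (Fin n)) : Perm (Fin (n + 1)) :=
  (finSuccEquiv n).trans (e.optionCongr.trans (finSuccEquiv' p).symm)

@[simp] lemma consPerm_zero (p : Fin (n + 1)) (e : Perm (Fin n)) : consPerm p e 0 = p := by
  simp [consPerm]

@[simp] lemma consPerm_succ (p : Fin (n + 1)) (e : Perm (Fin n)) (i : Fin n) :
    consPerm p e i.succ = p.succAbove (e i) := by
  simp [consPerm]

lemma consPerm_injective :
    Function.Injective fun pe : Fin (n + 1) × Perm (Fin n) => consPerm pe.1 pe.2 := by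
  rintro ⟨p, e⟩ ⟨q, f⟩ h
  obtain rfl : p = q := by simpa using DFunLike.congr_fun h 0
  obtain rfl : e = f := Equiv.ext fun i => by simpa using DFunLike.congr_fun h i.succ
  rfl

lemma exists_consPerm_eq (u : Perm (Fin (n + 1))) : ∃ p e, consPerm p e = u := by
  have hbij := (Fintype.bijective_iff_injective_and_card _).mpr
    ⟨consPerm_injective (n := n), by simp [Fintype.card_perm, Nat.factorial_succ]⟩
  obtain ⟨⟨p, e⟩, h⟩ := hbij.2 u
  exact ⟨p, e, h⟩

lemma lehmer_consPerm_zero (p : Fin (n + 1)) (e : Perm (Fin n)) :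
    lehmer (consPerm p e) 0 = p := by
  rw [lehmer_eq_card, Fin.card_filter_univ_succ]
  simp only [lt_self_iff_false, false_and, if_false, Fin.succ_pos, true_and, consPerm_succ,
    consPerm_zero, Fin.succAbove_lt_iff_castSucc_lt]
  rw [card_equiv e (t := {x | x.castSucc < p}) (by simp)]
  simp only [Fin.lt_def, Fin.val_castSucc, Fin.card_filter_val_lt]
  omega

lemma lehmer_consPerm_succ (p : Fin (n + 1)) (e : Perm (Fin n)) (i : Fin n) :
    lehmer (consPerm p e) i.succ = lehmer e i := by
  rw [lehmer_eq_card, lehmer_eq_card, Fin.card_filter_univ_succ]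
  simp [Fin.succAbove_lt_succAbove_iff]

lemma mk_succ_mem_Invs_consPerm (p : Fin (n + 1)) (e : Perm (Fin n)) (i j : Fin n) :
    (i.succ, j.succ) ∈ Invs (consPerm p e) ↔ (i, j) ∈ Invs e := by
  simp [mem_Invs, Fin.succAbove_lt_succAbove_iff]

lemma Fin.antitone_succAbove_left (i : Fin n) :
    Antitone fun p : Fin (n + 1) => p.succAbove i := by
  intro p q hpq
  dsimp only
  rcases lt_or_ge i.castSucc p with hp | hp
  · rw [Fin.succAbove_of_castSucc_lt _ _ hp, Fin.succAbove_of_castSucc_lt _ _ (hp.trans_le hpq)]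
  rw [Fin.succAbove_of_le_castSucc _ _ hp]
  rcases lt_or_ge i.castSucc q with hq | hq
  · rw [Fin.succAbove_of_castSucc_lt _ _ hq]
    exact Fin.castSucc_lt_succ.le
  · rw [Fin.succAbove_of_le_castSucc _ _ hq]

lemma Fin.min_succAbove_le_succAbove_min (p₁ p₂ : Fin (n + 1)) {b c a : Fin n}
    (h : min b c ≤ a) : min (p₁.succAbove b) (p₂.succAbove c) ≤ (min p₁ p₂).succAbove a := by
  rcases min_le_iff.mp h with hb | hc
  · exact (min_le_left _ _).trans <| (Fin.succAbove_le_succAbove_iff.mpr hb).trans <|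
      Fin.antitone_succAbove_left a (min_le_left _ _)
  · exact (min_le_right _ _).trans <| (Fin.succAbove_le_succAbove_iff.mpr hc).trans <|
      Fin.antitone_succAbove_left a (min_le_right _ _)

structure IsLehmerMeet (u₁ u₂ v : Perm (Fin n)) : Prop where
  lehmer_eq : lehmer v = lehmer u₁ ⊓ lehmer u₂
  invs_subset : Invs v ⊆ Invs u₁ ∪ Invs u₂
  inf_le : ∀ j, u₁ j ⊓ u₂ j ≤ v j

namespace IsLehmerMeet

variable {e₁ e₂ v : Perm (Fin n)}

lemma cons (h : IsLehmerMeet e₁ e₂ v) (p₁ p₂ : Fin (n + 1)) :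
    IsLehmerMeet (consPerm p₁ e₁) (consPerm p₂ e₂) (consPerm (p₁ ⊓ p₂) v) := by
  have hle : ∀ j, consPerm p₁ e₁ j ⊓ consPerm p₂ e₂ j ≤ consPerm (p₁ ⊓ p₂) v j := by
    refine Fin.cases (by simp) fun j => ?_
    simpa using Fin.min_succAbove_le_succAbove_min p₁ p₂ (h.inf_le j)
  refine ⟨funext <| Fin.cases ?zero fun i => ?succ, ?invs, hle⟩
  case zero => simp only [lehmer_consPerm_zero, Pi.inf_apply, Fin.coe_min]
  case succ => simp only [lehmer_consPerm_succ, h.lehmer_eq, Pi.inf_apply]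
  rintro ⟨i, j⟩ hij
  induction j using Fin.cases with
  | zero => exact absurd (mem_Invs.mp hij).1 (Fin.not_lt_zero i)
  | succ m =>
  induction i using Fin.cases with
  | zero =>
    have hinf : consPerm p₁ e₁ m.succ ⊓ consPerm p₂ e₂ m.succ <
        consPerm p₁ e₁ 0 ⊓ consPerm p₂ e₂ 0 := by
      simpa using (hle m.succ).trans_lt (mem_Invs.mp hij).2
    simp only [mem_union, mem_Invs, Fin.succ_pos, true_and]
    contrapose! hinf
    exact inf_le_inf hinf.1 hinf.2
  | succ k =>
    simpa only [mk_succ_mem_Invs_consPerm, mem_union] using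
      h.invs_subset ((mk_succ_mem_Invs_consPerm ..).mp hij)

end IsLehmerMeet

lemma exists_isLehmerMeet (u₁ u₂ : Perm (Fin n)) : ∃ v, IsLehmerMeet u₁ u₂ v := by
  induction n with
  | zero => exact ⟨1, funext (·.elim0), by simp [Invs], (·.elim0)⟩
  | succ n ih =>
    obtain ⟨p₁, e₁, rfl⟩ := exists_consPerm_eq u₁
    obtain ⟨p₂, e₂, rfl⟩ := exists_consPerm_eq u₂
    obtain ⟨v, hv⟩ := ih e₁ e₂
    exact ⟨_, hv.cons p₁ p₂⟩

/-- Lemma 3.1 (meet half): if `u₁ ≤_L w` and `u₂ ≤_L w`, then there is `v ≤_L w` whose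
Lehmer code is the coordinatewise minimum `c(u₁) ⊓ c(u₂)`; i.e. `c(Λ_w)` is closed under
the meet of `ℕ^n`. -/
theorem codeSet_meet_closed {n : ℕ} (w u₁ u₂ : Equiv.Perm (Fin n))
    (h₁ : leftWeak u₁ w) (h₂ : leftWeak u₂ w) :
    ∃ v : Equiv.Perm (Fin n), leftWeak v w ∧
      lehmer v = (fun i => min (lehmer u₁ i) (lehmer u₂ i)) := by
  obtain ⟨v, hv⟩ := exists_isLehmerMeet u₁ u₂
  exact ⟨v, hv.invs_subset.trans (union_subset h₁ h₂), hv.lehmer_eq⟩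
end

section
/- Let w ∈ S_n and let x = (x_1,…,x_n) ∈ c(Λ_w). Then x is the coordinatewise maximum (join) of the elements b_{i,x_i}(w) taken over all i ∈ {1,…,n} with x_i > 0. -/
section

variable {n : ℕ}

@[simp]
lemma mk_mem_Invs {w : Equiv.Perm (Fin n)} {i k : Fin n} :
    (i, k) ∈ Invs w ↔ i < k ∧ w k < w i := by
  simp [Invs]

lemma card_filter_Invs_fst_eq (w : Equiv.Perm (Fin n)) (i : Fin n)
    (P : Fin n → Prop) [DecidablePred P] :
    ((Invs w).filter (fun p => p.1 = i ∧ P p.2)).card =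
      (Finset.univ.filter (fun k => i < k ∧ w k < w i ∧ P k)).card := by
  refine Finset.card_bij (fun p _ => p.2) ?_ (fun p hp q hq h => ?_) (fun k hk => ?_)
  · rintro ⟨i', k⟩ hp
    simp only [Finset.mem_filter, mk_mem_Invs] at hp
    obtain ⟨⟨hik, hwk⟩, rfl, hP⟩ := hp
    simpa using ⟨hik, hwk, hP⟩
  · simp only [Finset.mem_filter] at hp hq
    exact Prod.ext (hp.2.1.trans hq.2.1.symm) h
  · simp only [Finset.mem_filter, Finset.mem_univ, true_and] at hk
    exact ⟨(i, k), by simpa [and_assoc] using hk, rfl⟩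

lemma lehmer_eq_card_s9 (v : Equiv.Perm (Fin n)) (i : Fin n) :
    lehmer v i = (Finset.univ.filter (fun k => i < k ∧ v k < v i)).card := by
  simpa [lehmer] using card_filter_Invs_fst_eq v i (fun _ => True)

lemma mext_castSucc_eq_card (w : Equiv.Perm (Fin n)) (i j : Fin n) :
    mext w i j.castSucc = (Finset.univ.filter (fun k => i < k ∧ w k < w i ∧ k < j)).card := by
  simpa [mext] using card_filter_Invs_fst_eq w i (· < j)

lemma mext_castSucc_self (w : Equiv.Perm (Fin n)) (j : Fin n) :
    mext w j j.castSucc = 0 := by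
  rw [mext_castSucc_eq_card, Finset.card_eq_zero, Finset.filter_eq_empty_iff]
  exact fun k _ ⟨hjk, _, hkj⟩ => lt_asymm hjk hkj

lemma bmin_self (w : Equiv.Perm (Fin n)) (j : Fin n) (x : ℕ) : bmin w j x j = x := by
  simp [bmin, mext_castSucc_self]

/- An inversion `(i,k)` of `v` either has `k < j`, and is then an inversion of `w` counted by
`m_{i,j}(w)`, or has `k > j` and `v k < v i ≤ v j`, since `(i,j)` is not an inversion of `w`. -/
lemma lehmer_le_mext_add_lehmer {v w : Equiv.Perm (Fin n)} (hvw : leftWeak v w)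
    {i j : Fin n} (hij : i ≤ j) (hw : w i ≤ w j) :
    lehmer v i ≤ mext w i j.castSucc + lehmer v j := by
  have hvij : v i ≤ v j := by
    rcases hij.lt_or_eq with hij | rfl
    · by_contra! hvji
      exact hw.not_gt (mk_mem_Invs.mp (hvw (mk_mem_Invs.mpr ⟨hij, hvji⟩))).2
    · exact le_rfl
  have hsplit : Finset.univ.filter (fun k => i < k ∧ v k < v i) ⊆
      Finset.univ.filter (fun k => i < k ∧ w k < w i ∧ k < j) ∪
        Finset.univ.filter (fun k => j < k ∧ v k < v j) := by
    intro k hk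
    simp only [Finset.mem_filter, Finset.mem_union, Finset.mem_univ, true_and] at hk ⊢
    obtain ⟨hik, hvk⟩ := hk
    rcases lt_trichotomy k j with hkj | rfl | hjk
    · exact .inl ⟨hik, (mk_mem_Invs.mp (hvw (mk_mem_Invs.mpr ⟨hik, hvk⟩))).2, hkj⟩
    · exact absurd hvij hvk.not_ge
    · exact .inr ⟨hjk, hvk.trans_le hvij⟩
  calc lehmer v i = (Finset.univ.filter (fun k => i < k ∧ v k < v i)).card := lehmer_eq_card_s9 v i
    _ ≤ _ := (Finset.card_le_card hsplit).trans (Finset.card_union_le _ _)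
    _ = mext w i j.castSucc + lehmer v j := by rw [mext_castSucc_eq_card, lehmer_eq_card_s9]

lemma bmin_lehmer_le {v w : Equiv.Perm (Fin n)} (hvw : leftWeak v w) (i : Fin n) :
    bmin w i (lehmer v i) ≤ lehmer v := by
  intro j
  simp only [bmin, Fin.val_fin_le]
  split_ifs with h
  · exact tsub_le_iff_left.mpr (lehmer_le_mext_add_lehmer hvw h.1 h.2)
  · exact Nat.zero_le _

lemma le_sup_bmin (w : Equiv.Perm (Fin n)) (x : Fin n → ℕ) :
    x ≤ (Finset.univ.filter (fun i : Fin n => 0 < x i)).sup (fun i => bmin w i (x i)) := by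
  intro j
  rcases (x j).eq_zero_or_pos with hxj | hxj
  · simp [hxj]
  · calc x j = bmin w j (x j) j := (bmin_self w j (x j)).symm
      _ ≤ _ := Finset.le_sup (f := fun i => bmin w i (x i)) (by simpa using hxj) j

end

/-- Lemma 4.6: every `x ∈ c(Λ_w)` is the coordinatewise maximum (join) of the elements
`b_{i,x_i}(w)` over all `i` with `x_i > 0`. -/
theorem bmin_decompose {n : ℕ} (w : Equiv.Perm (Fin n)) (x : Fin n → ℕ)
    (hx : x ∈ codeSet w) :
    x = (Finset.univ.filter (fun i : Fin n => 0 < x i)).sup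
          (fun i => bmin w i (x i)) := by
  obtain ⟨v, hvw, rfl⟩ := hx
  exact le_antisymm (le_sup_bmin w _) (Finset.sup_le fun i _ => bmin_lehmer_le hvw i)
end
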